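/- arXiv:1103.3538 — 2 statements merged into one kernel-verified Lean document; each statement's English description precedes it below -/
import Mathlib

section
/- Lemma 4.2 (strip analyticity implies membership in the analytic Banach scale): Let ρ > 0 and let F be holomorphic on the strip S = {z ∈ ℂ : |Im z| < ρ} with sup_{|y|<ρ} ∫_ℝ |F(x+iy)|² dx < ∞, and let f : ℝ → ℝ be the (real-valued) restriction of F to the real axis. Then for every ρ' < ρ and every α ≥ 0 one has f ∈ B_{α,ρ'}, i.e. all derivatives f^{(n)} lie in L²(ℝ) and Σ_{n=0}^∞ (‖f^{(n)}‖_{L²(ℝ)}/n!) n^α ρ'^n < ∞. -/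
open MeasureTheory Topology Filter
open scoped ENNReal

/-- The `L²(ℝ)` norm. -/
noncomputable def L2Norm (f : ℝ → ℝ) : ℝ := (eLpNorm f 2 volume).toReal

/-- The `n`-th term (for `n ≥ 1`, evaluated at `n`) of the `B_{α,ρ}` norm. -/
noncomputable def Bterm (α ρ : ℝ) (f : ℝ → ℝ) (n : ℕ) : ℝ :=
  L2Norm (iteratedDeriv n f) / (n.factorial : ℝ) * (n : ℝ) ^ α * ρ ^ n

/-- Membership in the analytic Banach scale `B_{α,ρ}`: all derivatives lie in `L²(ℝ)`
and `‖f‖_{B_{α,ρ}} = ‖f‖_{L²} + Σ_{n≥1} (‖f^{(n)}‖_{L²}/n!) n^α ρ^n < ∞`. -/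
def MemBspace (α ρ : ℝ) (f : ℝ → ℝ) : Prop :=
  (∀ n : ℕ, MemLp (iteratedDeriv n f) 2 volume) ∧
  Summable (fun n : ℕ => Bterm α ρ f (n + 1))

/-!
Cauchy's estimate on the circle of radius `r` about a real point `x`, with `ρ' < r < ρ`, bounds
`|f⁽ⁿ⁾(x)|` by `n! / (2π rⁿ)` times the integral of `|F|` over that circle. By Cauchy–Schwarz in
the angle and Fubini, the square of this bound integrates over `x` to at most `(n! / rⁿ)² M`:
for a fixed angle `θ`, the circle points `x + r e^{iθ}` trace the horizontal line
`Im z = r sin θ` inside the strip, shifted by `r cos θ`. Thus `‖f⁽ⁿ⁾‖_{L²} / n! ≤ √M r⁻ⁿ`, and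
`∑ nᵅ (ρ' / r)ⁿ` converges.
-/

open Complex Real Metric Set
open scoped NNReal Nat

theorem sq_lintegral_le_measure_univ_mul_lintegral_sq {α : Type*} [MeasurableSpace α]
    (μ : Measure α) {g : α → ℝ≥0∞} (hg : AEMeasurable g μ) :
    (∫⁻ a, g a ∂μ) ^ 2 ≤ μ univ * ∫⁻ a, g a ^ 2 ∂μ := by
  have hpq : (2 : ℝ).HolderConjugate 2 := Real.holderConjugate_iff.2 ⟨one_lt_two, by norm_num⟩
  have h := ENNReal.lintegral_mul_le_Lp_mul_Lq μ hpq hg aemeasurable_const (g := fun _ => 1)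
  simp only [Pi.mul_apply, mul_one, ENNReal.one_rpow, lintegral_one] at h
  calc (∫⁻ a, g a ∂μ) ^ 2 ≤ ((∫⁻ a, g a ^ (2 : ℝ) ∂μ) ^ (1 / 2 : ℝ) * μ univ ^ (1 / 2 : ℝ)) ^ 2 :=
        pow_le_pow_left' h 2
    _ = μ univ * ∫⁻ a, g a ^ 2 ∂μ := by
        rw [mul_pow, ← ENNReal.rpow_natCast, ← ENNReal.rpow_natCast (_ ^ _), ← ENNReal.rpow_mul,
          ← ENNReal.rpow_mul]
        norm_num [mul_comm]

theorem sq_eLpNorm_two {α F : Type*} [MeasurableSpace α] [NormedAddCommGroup F] {μ : Measure α}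
    (f : α → F) : eLpNorm f 2 μ ^ 2 = ∫⁻ x, ‖f x‖ₑ ^ 2 ∂μ := by
  simpa using eLpNorm_nnreal_pow_eq_lintegral (μ := μ) (f := f) (p := 2) two_ne_zero

theorem circleMap_ofReal (x r θ : ℝ) :
    circleMap (x : ℂ) r θ = ↑(x + r * Real.cos θ) + ↑(r * Real.sin θ) * I := by
  simp [circleMap, exp_mul_I]; ring

theorem lintegral_lintegral_circleMap_sq_le {E : Type*} [NormedAddCommGroup E] {F : ℂ → E} {r : ℝ}
    {M : ℝ≥0∞} (hr : 0 ≤ r)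
    (hF : ContinuousOn F {z : ℂ | |z.im| ≤ r})
    (hM : ∀ y : ℝ, |y| ≤ r → ∫⁻ x : ℝ, ‖F (x + y * I)‖ₑ ^ 2 ≤ M) :
    ∫⁻ x : ℝ, ∫⁻ θ in Ioc 0 (2 * π), ‖F (circleMap x r θ)‖ₑ ^ 2 ≤ ENNReal.ofReal (2 * π) * M := by
  have hsin (θ : ℝ) : |r * Real.sin θ| ≤ r := by
    rw [abs_mul, abs_of_nonneg hr]
    exact mul_le_of_le_one_right hr (Real.abs_sin_le_one θ)
  have hmem (x θ : ℝ) : circleMap (x : ℂ) r θ ∈ {z : ℂ | |z.im| ≤ r} := by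
    simpa only [mem_ofPred_eq, circleMap_ofReal, add_im, ofReal_im, mul_im, ofReal_re, I_re, I_im,
      mul_zero, mul_one, zero_add, add_zero] using hsin θ
  have hcont : Continuous fun p : ℝ × ℝ => F (circleMap (p.1 : ℂ) r p.2) :=
    hF.comp_continuous (by unfold circleMap; fun_prop) fun p => hmem p.1 p.2
  have hslice (θ : ℝ) : ∫⁻ x : ℝ, ‖F (circleMap x r θ)‖ₑ ^ 2 ≤ M := by
    simp_rw [circleMap_ofReal]
    rw [lintegral_add_right_eq_self (fun x : ℝ => ‖F (x + ↑(r * Real.sin θ) * I)‖ₑ ^ 2)]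
    exact hM _ (hsin θ)
  calc ∫⁻ x : ℝ, ∫⁻ θ in Ioc 0 (2 * π), ‖F (circleMap x r θ)‖ₑ ^ 2
      = ∫⁻ θ in Ioc 0 (2 * π), ∫⁻ x : ℝ, ‖F (circleMap x r θ)‖ₑ ^ 2 :=
        lintegral_lintegral_swap (hcont.enorm.measurable.pow_const 2).aemeasurable
    _ ≤ ∫⁻ _ in Ioc 0 (2 * π), M := lintegral_mono hslice
    _ = ENNReal.ofReal (2 * π) * M := by
        rw [setLIntegral_const, Real.volume_Ioc, sub_zero, mul_comm]

theorem closedBall_ofReal_subset_abs_im_le (x r : ℝ) :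
    closedBall (x : ℂ) r ⊆ {z : ℂ | |z.im| ≤ r} := fun z hz => by
  simpa using (abs_im_le_norm (z - x)).trans (mem_closedBall_iff_norm.1 hz)

section

variable {E : Type*} [NormedAddCommGroup E] [NormedSpace ℂ E] [CompleteSpace E]

theorem norm_iteratedDeriv_le_circleIntegral_norm {F : ℂ → E} {c : ℂ} {r : ℝ} (hr : 0 < r)
    (hF : DifferentiableOn ℂ F (closedBall c r)) (n : ℕ) :
    ‖iteratedDeriv n F c‖ ≤ n ! / (2 * π * r ^ n) * ∫ θ in 0..2 * π, ‖F (circleMap c r θ)‖ := by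
  lift r to ℝ≥0 using hr.le
  have hp := hF.hasFPowerSeriesOnBall (mod_cast hr)
  have hterm : iteratedDeriv n F c = n ! • cauchyPowerSeries F c r n (fun _ => 1) := by
    rw [iteratedDeriv_eq_iteratedFDeriv, ← hp.factorial_smul 1 n]
  have hcoeff : ‖cauchyPowerSeries F c r n (fun _ => 1)‖ ≤ ‖cauchyPowerSeries F c r n‖ := by
    simp
  calc ‖iteratedDeriv n F c‖ ≤ n ! * ‖cauchyPowerSeries F c r n‖ := by
        rw [hterm]; exact norm_nsmul_le.trans (by gcongr)
    _ ≤ n ! * (((2 * π)⁻¹ * ∫ θ in 0..2 * π, ‖F (circleMap c r θ)‖) * |(r : ℝ)|⁻¹ ^ n) := by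
        gcongr; exact norm_cauchyPowerSeries_le F c r n
    _ = _ := by
        rw [abs_of_pos hr, inv_pow]; field_simp

theorem enorm_iteratedDeriv_le_lintegral_circleMap {F : ℂ → E} {c : ℂ} {r : ℝ} (hr : 0 < r)
    (hF : DifferentiableOn ℂ F (closedBall c r)) (n : ℕ) :
    ‖iteratedDeriv n F c‖ₑ ≤
      ENNReal.ofReal (n ! / (2 * π * r ^ n)) * ∫⁻ θ in Ioc 0 (2 * π), ‖F (circleMap c r θ)‖ₑ := by
  have hcont : Continuous fun θ => F (circleMap c r θ) :=
    hF.continuousOn.comp_continuous (continuous_circleMap c r)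
      fun θ => sphere_subset_closedBall (circleMap_mem_sphere c hr.le θ)
  rw [← ofReal_integral_norm_eq_lintegral_enorm (hcont.intervalIntegrable 0 (2 * π)).1,
    ← intervalIntegral.integral_of_le (by positivity), ← ENNReal.ofReal_mul (by positivity),
    ← ofReal_norm]
  exact ENNReal.ofReal_le_ofReal (norm_iteratedDeriv_le_circleIntegral_norm hr hF n)

theorem lintegral_enorm_sq_iteratedDeriv_le_of_strip {F : ℂ → E} {r : ℝ} {M : ℝ≥0∞} (hr : 0 < r)
    (hF : DifferentiableOn ℂ F {z : ℂ | |z.im| ≤ r})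
    (hM : ∀ y : ℝ, |y| ≤ r → ∫⁻ x : ℝ, ‖F (x + y * I)‖ₑ ^ 2 ≤ M) (n : ℕ) :
    ∫⁻ x : ℝ, ‖iteratedDeriv n F x‖ₑ ^ 2 ≤ ENNReal.ofReal (n ! / r ^ n) ^ 2 * M := by
  set c := ENNReal.ofReal (n ! / (2 * π * r ^ n))
  set circleL2 : ℝ → ℝ≥0∞ := fun x => ∫⁻ θ in Ioc 0 (2 * π), ‖F (circleMap x r θ)‖ₑ ^ 2
  have hpointwise (x : ℝ) :
      ‖iteratedDeriv n F x‖ₑ ^ 2 ≤ c ^ 2 * (ENNReal.ofReal (2 * π) * circleL2 x) := by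
    have hball := closedBall_ofReal_subset_abs_im_le x r
    have hcont : Continuous fun θ => F (circleMap x r θ) :=
      hF.continuousOn.comp_continuous (continuous_circleMap x r)
        fun θ => hball (sphere_subset_closedBall (circleMap_mem_sphere _ hr.le θ))
    calc ‖iteratedDeriv n F x‖ₑ ^ 2
        ≤ (c * ∫⁻ θ in Ioc 0 (2 * π), ‖F (circleMap x r θ)‖ₑ) ^ 2 :=
          pow_le_pow_left' (enorm_iteratedDeriv_le_lintegral_circleMap hr (hF.mono hball) n) 2
      _ ≤ c ^ 2 * (ENNReal.ofReal (2 * π) * circleL2 x) := by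
          rw [mul_pow]
          gcongr
          simpa [circleL2, Real.volume_Ioc] using sq_lintegral_le_measure_univ_mul_lintegral_sq
            (volume.restrict (Ioc 0 (2 * π))) hcont.enorm.measurable.aemeasurable
  have hconst : c * ENNReal.ofReal (2 * π) = ENNReal.ofReal (n ! / r ^ n) := by
    rw [← ENNReal.ofReal_mul (by positivity)]
    congr 1
    field_simp
  calc ∫⁻ x : ℝ, ‖iteratedDeriv n F x‖ₑ ^ 2
      ≤ ∫⁻ x : ℝ, c ^ 2 * (ENNReal.ofReal (2 * π) * circleL2 x) := lintegral_mono hpointwise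
    _ = c ^ 2 * ENNReal.ofReal (2 * π) * ∫⁻ x : ℝ, circleL2 x := by
        rw [lintegral_const_mul' _ _ (by finiteness), lintegral_const_mul' _ _ (by finiteness),
          mul_assoc]
    _ ≤ c ^ 2 * ENNReal.ofReal (2 * π) * (ENNReal.ofReal (2 * π) * M) := by
        gcongr
        exact lintegral_lintegral_circleMap_sq_le hr.le hF.continuousOn hM
    _ = ENNReal.ofReal (n ! / r ^ n) ^ 2 * M := by
        rw [← hconst]; ring

theorem eLpNorm_iteratedDeriv_le_of_strip {F : ℂ → E} {r : ℝ} {M : ℝ≥0∞} (hr : 0 < r)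
    (hF : DifferentiableOn ℂ F {z : ℂ | |z.im| ≤ r})
    (hM : ∀ y : ℝ, |y| ≤ r → ∫⁻ x : ℝ, ‖F (x + y * I)‖ₑ ^ 2 ≤ M) (n : ℕ) :
    eLpNorm (fun x : ℝ => iteratedDeriv n F x) 2 volume ≤
      ENNReal.ofReal (n ! / r ^ n) * M ^ (2⁻¹ : ℝ) := by
  rw [← ENNReal.pow_le_pow_left_iff two_ne_zero, sq_eLpNorm_two, mul_pow,
    ← ENNReal.rpow_natCast (_ ^ _), ← ENNReal.rpow_mul]
  simpa using lintegral_enorm_sq_iteratedDeriv_le_of_strip hr hF hM n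

end

theorem iteratedDeriv_real_of_complex {F : ℂ → ℂ} {f : ℝ → ℝ} (hF : ∀ x : ℝ, AnalyticAt ℂ F x)
    (hf : ∀ x : ℝ, (f x : ℂ) = F x) (n : ℕ) :
    iteratedDeriv n f = fun x : ℝ => (iteratedDeriv n F x).re := by
  induction n with
  | zero => funext x; simp [← hf x]
  | succ n ih =>
    funext x
    have hderiv : HasDerivAt (iteratedDeriv n F) (iteratedDeriv (n + 1) F x) x := by
      rw [iteratedDeriv_succ, iteratedDeriv_eq_iterate]
      exact ((hF x).iterated_deriv n).differentiableAt.hasDerivAt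
    rw [iteratedDeriv_succ, ih]
    exact hderiv.real_of_complex.deriv

theorem summable_rpow_mul_geometric_succ (α : ℝ) {q : ℝ} (hq : |q| < 1) :
    Summable fun n : ℕ => ((n + 1 : ℕ) : ℝ) ^ α * |q| ^ (n + 1) := by
  have hgeom : Summable fun n : ℕ => ((n + 1 : ℕ) : ℝ) ^ ⌈α⌉₊ * |q| ^ (n + 1) :=
    (summable_nat_add_iff (f := fun n : ℕ => (n : ℝ) ^ ⌈α⌉₊ * |q| ^ n) 1).2
      (summable_pow_mul_geometric_of_norm_lt_one ⌈α⌉₊ (by rwa [Real.norm_eq_abs, abs_abs]))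
  refine hgeom.of_norm_bounded fun n => ?_
  have hn : (1 : ℝ) ≤ ((n + 1 : ℕ) : ℝ) := by exact_mod_cast Nat.le_add_left 1 n
  rw [norm_mul, norm_pow, Real.norm_eq_abs, Real.norm_eq_abs, abs_abs,
    abs_of_nonneg (by positivity)]
  exact mul_le_mul_of_nonneg_right ((Real.rpow_le_rpow_of_exponent_le hn (Nat.le_ceil α)).trans_eq
    (Real.rpow_natCast _ _)) (by positivity)

theorem memBspace_of_eLpNorm_iteratedDeriv_le {f : ℝ → ℝ} {r ρ : ℝ} {C : ℝ≥0∞} (α : ℝ)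
    (hr : 0 < r) (hρ : |ρ| < r) (hC : C ≠ ∞) (hf : AEStronglyMeasurable f volume)
    (hbound : ∀ n : ℕ, eLpNorm (iteratedDeriv n f) 2 volume ≤ ENNReal.ofReal (n ! / r ^ n) * C) :
    MemBspace α ρ f := by
  have hL2 (n : ℕ) : L2Norm (iteratedDeriv n f) ≤ n ! / r ^ n * C.toReal := by
    have hcoeff : (0 : ℝ) ≤ n ! / r ^ n := by positivity
    simpa [L2Norm, ENNReal.toReal_mul, ENNReal.toReal_ofReal hcoeff] using
      ENNReal.toReal_mono (by finiteness) (hbound n)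
  refine ⟨fun n => ⟨?_, (hbound n).trans_lt (by finiteness)⟩, ?_⟩
  · cases n with
    | zero => simpa using hf
    | succ n =>
      rw [iteratedDeriv_succ]
      exact (stronglyMeasurable_deriv _).aestronglyMeasurable
  · have hq : |ρ / r| < 1 := by rwa [abs_div, abs_of_pos hr, div_lt_one hr]
    refine ((summable_rpow_mul_geometric_succ α hq).mul_left C.toReal).of_norm_bounded fun n => ?_
    calc ‖Bterm α ρ f (n + 1)‖
        = L2Norm (iteratedDeriv (n + 1) f) / (n + 1)! * ((n + 1 : ℕ) : ℝ) ^ α * |ρ| ^ (n + 1) := by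
          rw [Bterm, Real.norm_eq_abs, abs_mul, abs_mul, abs_pow,
            abs_of_nonneg (by unfold L2Norm; positivity), abs_of_nonneg (by positivity)]
      _ ≤ ((n + 1)! / r ^ (n + 1) * C.toReal) / (n + 1)! * ((n + 1 : ℕ) : ℝ) ^ α
            * |ρ| ^ (n + 1) := by
          gcongr; exact hL2 (n + 1)
      _ = C.toReal * (((n + 1 : ℕ) : ℝ) ^ α * |ρ / r| ^ (n + 1)) := by
          rw [abs_div, abs_of_pos hr, div_pow]; field_simp

theorem strip_holomorphic_restriction_mem_banach_scale_general
    (ρ : ℝ) (F : ℂ → ℂ)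
    (hF : DifferentiableOn ℂ F {z : ℂ | |z.im| < ρ})
    (hbound : ∃ M : ℝ≥0∞, M ≠ ⊤ ∧ ∀ y : ℝ, |y| < ρ →
      (∫⁻ x : ℝ, (‖F (x + y * Complex.I)‖₊ : ℝ≥0∞) ^ 2) ≤ M)
    (f : ℝ → ℝ) (hf : ∀ x : ℝ, (f x : ℂ) = F x) :
    ∀ ρ' : ℝ, 0 < ρ' → ρ' < ρ → ∀ α : ℝ, 0 ≤ α → MemBspace α ρ' f := by
  obtain ⟨M, hM_top, hM⟩ := hbound
  intro ρ' hρ' hρ'ρ α _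
  obtain ⟨r, hρ'r, hrρ⟩ := exists_between hρ'ρ
  have hr : 0 < r := hρ'.trans hρ'r
  have hreal (x : ℝ) : AnalyticAt ℂ F x :=
    hF.analyticAt <| (isOpen_lt (by fun_prop) continuous_const).mem_nhds <| by
      simpa using hr.trans hrρ
  have hderiv := iteratedDeriv_real_of_complex hreal hf
  have hf_cont : Continuous f := isometry_ofReal.comp_continuous_iff.1 <| by
    simpa only [Function.comp_def, hf] using continuous_iff_continuousAt.2 fun x =>
      (hreal x).continuousAt.comp continuous_ofReal.continuousAt
  refine memBspace_of_eLpNorm_iteratedDeriv_le α hr (by rwa [abs_of_pos hρ'])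
    (ENNReal.rpow_ne_top_of_nonneg (inv_nonneg.2 zero_le_two) hM_top)
    hf_cont.aestronglyMeasurable fun n => ?_
  calc eLpNorm (iteratedDeriv n f) 2 volume
      ≤ eLpNorm (fun x : ℝ => iteratedDeriv n F x) 2 volume :=
        eLpNorm_mono fun x => by simpa [hderiv n] using abs_re_le_norm _
    _ ≤ ENNReal.ofReal (n ! / r ^ n) * M ^ (2⁻¹ : ℝ) :=
        eLpNorm_iteratedDeriv_le_of_strip hr (hF.mono fun z hz => lt_of_le_of_lt hz hrρ)
          (fun y hy => hM y (hy.trans_lt hrρ)) n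

/-- **Lemma 4.2** (strip analyticity implies membership in the analytic Banach scale):
if `F` is holomorphic on the strip `{|Im z| < ρ}` with uniformly bounded `L²` norms on
horizontal lines, and `f` is its real-valued restriction to the real axis, then
`f ∈ B_{α,ρ'}` for every `ρ' < ρ` and every `α ≥ 0`. -/
theorem strip_holomorphic_restriction_mem_banach_scale
    (ρ : ℝ) (hρ : 0 < ρ) (F : ℂ → ℂ)
    (hF : DifferentiableOn ℂ F {z : ℂ | |z.im| < ρ})
    (hbound : ∃ M : ℝ≥0∞, M ≠ ⊤ ∧ ∀ y : ℝ, |y| < ρ →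
      (∫⁻ x : ℝ, (‖F (x + y * Complex.I)‖₊ : ℝ≥0∞) ^ 2) ≤ M)
    (f : ℝ → ℝ) (hf : ∀ x : ℝ, (f x : ℂ) = F x) :
    ∀ ρ' : ℝ, 0 < ρ' → ρ' < ρ → ∀ α : ℝ, 0 ≤ α → MemBspace α ρ' f :=
  strip_holomorphic_restriction_mem_banach_scale_general ρ F hF hbound f hf
end

section
/- Bootstrap lemma for the exponential Gronwall-type bound: let c₀ > 1, c > 0, A > 0, T > 0 and let M : [0,T] → ℝ be continuous and nonnegative with M(0) ≤ A and M(t) ≤ A·exp(c ∫₀^t M(s) ds) for all t ∈ [0,T]. If T ≤ (log c₀)/(c₀ c A), then M(t) ≤ c₀ A for all t ∈ [0,T]. -/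
open Set

/-- **Bootstrap lemma for the exponential Gronwall-type bound**: if `M` is continuous
and nonnegative on `[0,T]` with `M(0) ≤ A` and
`M(t) ≤ A exp(c ∫₀ᵗ M(s) ds)` on `[0,T]`, and `T ≤ log c₀ / (c₀ c A)`, then
`M(t) ≤ c₀ A` on `[0,T]`. -/
theorem gronwall_exponential_bootstrap
    (c₀ c A T : ℝ) (hc₀ : 1 < c₀) (hc : 0 < c) (hA : 0 < A) (hT : 0 < T)
    (M : ℝ → ℝ) (hMcont : ContinuousOn M (Icc 0 T))
    (hMnonneg : ∀ t ∈ Icc (0 : ℝ) T, 0 ≤ M t)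
    (hM0 : M 0 ≤ A)
    (hMle : ∀ t ∈ Icc (0 : ℝ) T, M t ≤ A * Real.exp (c * ∫ s in (0 : ℝ)..t, M s))
    (hTle : T ≤ Real.log c₀ / (c₀ * c * A)) :
    ∀ t ∈ Icc (0 : ℝ) T, M t ≤ c₀ * A := by
  have hc₀0 : 0 < c₀ := lt_trans one_pos hc₀
  have hden : 0 < c₀ * c * A := by positivity
  have hTlog : c₀ * c * A * T ≤ Real.log c₀ := by
    rw [le_div_iff₀ hden] at hTle
    linarith
  set F : ℝ → ℝ := fun t => ∫ s in (0 : ℝ)..t, M s with hF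
  have hFcont : ContinuousOn F (Icc 0 T) := by
    have : ContinuousOn F (uIcc 0 T) := by
      apply intervalIntegral.continuousOn_primitive_interval
      exact (hMcont.mono (by rw [uIcc_of_le hT.le])).integrableOn_compact isCompact_uIcc
    rwa [uIcc_of_le hT.le] at this
  have hint : ∀ a b, a ∈ Icc (0:ℝ) T → b ∈ Icc (0:ℝ) T → IntervalIntegrable M MeasureTheory.volume a b := by
    intro a b ha hb
    apply ContinuousOn.intervalIntegrable
    apply hMcont.mono
    rw [uIcc]
    exact Icc_subset_Icc (le_inf ha.1 hb.1) (sup_le ha.2 hb.2)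
  -- key claim: F t ≤ c₀ * A * t on [0, T]
  set s : Set ℝ := {t | F t ≤ c₀ * A * t} with hs
  have hkey : Icc (0:ℝ) T ⊆ s := by
    apply IsClosed.Icc_subset_of_forall_exists_gt
    · have : s ∩ Icc 0 T = Icc 0 T ∩ (fun t => F t - c₀ * A * t) ⁻¹' Iic 0 := by
        ext t
        simp [hs, sub_nonpos, and_comm]
      rw [this]
      exact (hFcont.sub (by fun_prop)).preimage_isClosed_of_isClosed isClosed_Icc isClosed_Iic
    · simp [hs, hF]
    · rintro x ⟨hxs, hx0, hxT⟩ z hz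
      -- M x < c₀ * A strictly
      have hFx : F x ≤ c₀ * A * x := hxs
      have hxmem : x ∈ Icc (0:ℝ) T := ⟨hx0, hxT.le⟩
      have hMx : M x < c₀ * A := by
        have h1 : M x ≤ A * Real.exp (c * F x) := hMle x hxmem
        have h2 : c * F x < Real.log c₀ := by
          have : c * F x ≤ c * (c₀ * A * x) := by nlinarith
          have hlt : c * (c₀ * A * x) < c₀ * c * A * T := by nlinarith
          linarith
        have h3 : Real.exp (c * F x) < c₀ := by
          calc Real.exp (c * F x) < Real.exp (Real.log c₀) := Real.exp_lt_exp.mpr h2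
            _ = c₀ := Real.exp_log hc₀0
        nlinarith [Real.exp_pos (c * F x)]
      -- find a neighborhood where M < c₀ * A
      have hcw : ContinuousWithinAt M (Icc 0 T) x := hMcont x hxmem
      have hmem : {u | M u < c₀ * A} ∈ nhdsWithin x (Icc 0 T) :=
        hcw (Iio_mem_nhds hMx)
      rw [Metric.mem_nhdsWithin_iff] at hmem
      obtain ⟨ε, hε, hball⟩ := hmem
      set y : ℝ := min T (min z (x + ε / 2)) with hy
      have hxy : x < y := by
        apply lt_min hxT (lt_min hz (by linarith))
      have hyT : y ≤ T := min_le_left _ _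
      have hymem : y ∈ Icc (0:ℝ) T := ⟨le_trans hx0 hxy.le, hyT⟩
      refine ⟨y, ?_, hxy, le_trans (min_le_right _ _) (min_le_left _ _)⟩
      -- F y ≤ c₀ * A * y
      have hsplit : F y = F x + ∫ u in x..y, M u := by
        rw [hF]
        exact (intervalIntegral.integral_add_adjacent_intervals
          (hint 0 x (left_mem_Icc.mpr hT.le) hxmem) (hint x y hxmem hymem)).symm
      have hbound : (∫ u in x..y, M u) ≤ c₀ * A * (y - x) := by
        have : ∀ u ∈ Icc x y, M u ≤ c₀ * A := by
          intro u hu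
          have hu1 : u ∈ Icc (0:ℝ) T := ⟨le_trans hx0 hu.1, le_trans hu.2 hyT⟩
          have : u ∈ Metric.ball x ε := by
            rw [Metric.mem_ball, Real.dist_eq, abs_of_nonneg (by linarith [hu.1])]
            have : u ≤ x + ε / 2 := le_trans hu.2 (le_trans (min_le_right _ _) (min_le_right _ _))
            linarith
          exact (hball ⟨this, hu1⟩).le
        have := intervalIntegral.integral_mono_on hxy.le (hint x y hxmem hymem)
          (intervalIntegrable_const (c := c₀ * A)) this
        have h := this
        simp only [intervalIntegral.integral_const, smul_eq_mul] at h
        linarith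
      show F y ≤ c₀ * A * y
      rw [hsplit]; nlinarith
  -- conclude
  intro t ht
  have hFt : F t ≤ c₀ * A * t := hkey ht
  have h2 : c * F t ≤ Real.log c₀ := by
    have : c * F t ≤ c * (c₀ * A * t) := by nlinarith
    nlinarith [ht.2]
  calc M t ≤ A * Real.exp (c * F t) := hMle t ht
    _ ≤ A * Real.exp (Real.log c₀) := by gcongr
    _ = c₀ * A := by rw [Real.exp_log hc₀0]; ring
end
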